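/- arXiv:2602.20917 — 2 statements merged into one kernel-verified Lean document; each statement's English description precedes it below -/
import Mathlib

section
/- Let n be a squarefree positive integer and set S(n) := Σ_{d | n, d² < n} μ(d). Then: (i) if μ(n) = 1 then S(n) = 0; (ii) if n is prime then S(n) = 1; (iii) if n has a prime factor p with p² > n and p < n, then S(n) = 0; (iv) if n = p1·p2·p3 with primes p3 < p2 < p1 and p1² < n, then S(n) = −2; (v) if Ω(n) = 7 and P⁻(n)^8 > n (every prime factor of n exceeds n^{1/8}), then S(n) = −20. -/
/-!
The involution `d ↦ n / d` of the divisors of a squarefree `n ≠ 1` exchanges those below `√n`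
with those above it; when `μ n = 1` it preserves `μ`, so `S(n)` is half of `∑_{d ∣ n} μ d = 0`.
If `p ∣ n` and `n < p²`, the divisors below `√n` are exactly the divisors of `n / p`.
If `Ω n = 2K + 1` and every divisor with at most `K` prime factors lies below `√n`, the same
involution shows that these are all of them, and counting subsets of the prime factors gives
`S(n) = ∑_{j ≤ K} (-1)^j C(2K+1, j) = (-1)^K C(2K, K)`. Cases (ii) and (v) are `K = 0, 3`:
a divisor `d` with `Ω d ≤ K` has cofactor at least `P⁻(n)^(K+1)`, so `d² < n` once
`n < P⁻(n)^(2K+2)`. Case (iv) is `K = 1`, where a prime divisor is at most `p1 < √n`.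
-/

/-- `Smu n = ∑_{d ∣ n, d < √n} μ(d)`, where the condition `d < √n` is rendered
as `d² < n`. -/
def Smu (n : ℕ) : ℤ :=
  ∑ d ∈ n.divisors.filter (fun d => d ^ 2 < n), ArithmeticFunction.moebius d

section

open Finset ArithmeticFunction
open scoped ArithmeticFunction.Moebius ArithmeticFunction.Omega ArithmeticFunction.omega

theorem ArithmeticFunction.sum_divisors_moebius_eq_zero {n : ℕ} (hn : n ≠ 1) :
    ∑ d ∈ n.divisors, (μ d : ℤ) = 0 := by
  have h := congrArg (· n) moebius_mul_coe_zeta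
  rwa [coe_mul_zeta_apply, one_apply_ne hn] at h

theorem ArithmeticFunction.moebius_div_eq_of_moebius_eq_one {n d : ℕ} (hμ : μ n = 1)
    (hd : d ∣ n) : μ (n / d) = μ d := by
  have hsq : Squarefree n := moebius_ne_zero_iff_squarefree.mp (by simp [hμ])
  have hmul : μ n = μ d * μ (n / d) := by
    rw [← isMultiplicative_moebius.map_mul_of_coprime, Nat.mul_div_cancel' hd]
    exact Nat.coprime_of_squarefree_mul (by rwa [Nat.mul_div_cancel' hd])
  have hd_sq : μ d ^ 2 = 1 := moebius_sq_eq_one_of_squarefree (hsq.squarefree_of_dvd hd)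
  linear_combination (-μ d) * (hμ.symm.trans hmul) + (- μ (n / d)) * hd_sq

theorem sq_lt_iff_not_sq_lt_of_mul_eq {n d e : ℕ} (hsq : Squarefree n) (hn : n ≠ 1)
    (h : d * e = n) : d ^ 2 < n ↔ ¬ e ^ 2 < n := by
  have hne : d ≠ e := by
    rintro rfl
    rw [← h, Nat.isUnit_iff.mp (hsq d ⟨1, by rw [h, mul_one]⟩)] at hn
    exact hn rfl
  have hd : 0 < d := Nat.pos_of_ne_zero (by rintro rfl; exact hsq.ne_zero (by simp [← h]))
  have he : 0 < e := Nat.pos_of_ne_zero (by rintro rfl; exact hsq.ne_zero (by simp [← h]))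
  subst h
  rcases hne.lt_or_gt with hde | hde <;> constructor <;> intro <;> nlinarith

theorem Smu_eq_zero_of_moebius_eq_one {n : ℕ} (hμ : μ n = 1) : Smu n = 0 := by
  rcases eq_or_ne n 1 with rfl | hn
  · rfl
  have hsq : Squarefree n := moebius_ne_zero_iff_squarefree.mp (by simp [hμ])
  have hflip : ∑ d ∈ n.divisors with ¬ d ^ 2 < n, (μ d : ℤ) = Smu n := by
    rw [sum_filter, ← Nat.sum_div_divisors, Smu, sum_filter]
    refine sum_congr rfl fun d hd => ?_
    have hdvd := Nat.dvd_of_mem_divisors hd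
    simp only [← sq_lt_iff_not_sq_lt_of_mul_eq hsq hn (Nat.mul_div_cancel' hdvd),
      moebius_div_eq_of_moebius_eq_one hμ hdvd]
  have hsplit := sum_filter_add_sum_filter_not n.divisors (· ^ 2 < n) (fun d => (μ d : ℤ))
  rw [sum_divisors_moebius_eq_zero hn, hflip, ← Smu] at hsplit
  linarith

theorem divisors_filter_sq_lt_prime_mul {p m : ℕ} (hp : p.Prime) (hm : m < p) :
    {d ∈ (p * m).divisors | d ^ 2 < p * m} = m.divisors := by
  ext d
  simp only [mem_filter, Nat.mem_divisors, mul_ne_zero_iff, ne_eq, hp.ne_zero, not_false_eq_true,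
    true_and]
  constructor
  · rintro ⟨⟨hdvd, hm0⟩, hlt⟩
    have hpd : ¬ p ∣ d := fun hpd => by
      have := Nat.le_of_dvd (Nat.pos_of_ne_zero (by rintro rfl; simp_all)) hpd
      nlinarith
    exact ⟨Nat.Coprime.dvd_of_dvd_mul_left (hp.coprime_iff_not_dvd.mpr hpd).symm hdvd, hm0⟩
  · rintro ⟨hdvd, hm0⟩
    have := Nat.le_of_dvd (Nat.pos_of_ne_zero hm0) hdvd
    exact ⟨⟨hdvd.mul_left p, hm0⟩,
      by nlinarith [Nat.mul_le_mul this this, Nat.pos_of_ne_zero hm0]⟩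

theorem Smu_eq_zero_of_prime_dvd {n p : ℕ} (hp : p.Prime) (hpn : p ∣ n) (hn : n < p ^ 2)
    (hpn' : p < n) : Smu n = 0 := by
  obtain ⟨m, rfl⟩ := hpn
  have hm : m < p := by nlinarith
  have hm1 : m ≠ 1 := by rintro rfl; simp at hpn'
  rw [Smu, divisors_filter_sq_lt_prime_mul hp hm]
  exact sum_divisors_moebius_eq_zero hm1

theorem Nat.sum_divisors_eq_sum_powerset_primeFactors {M : Type*} [AddCommMonoid M] {n : ℕ}
    (hn : Squarefree n) (f : ℕ → M) :
    ∑ d ∈ n.divisors, f d = ∑ s ∈ n.primeFactors.powerset, f (∏ p ∈ s, p) := by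
  rw [← Nat.divisors_filter_squarefree_of_squarefree hn,
    Nat.sum_divisors_filter_squarefree hn.ne_zero, Nat.factors_eq]
  simp

theorem ArithmeticFunction.cardDistinctFactors_eq_card_primeFactors (n : ℕ) :
    ω n = #n.primeFactors := by
  rw [cardDistinctFactors_apply, ← List.card_toFinset]
  rfl

theorem sum_divisors_moebius_of_cardFactors_le {n : ℕ} (hn : Squarefree n) (K : ℕ) :
    ∑ d ∈ n.divisors with Ω d ≤ K, (μ d : ℤ) =
      ∑ j ∈ range (K + 1), (-1 : ℤ) ^ j * (ω n).choose j := by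
  have hprod : ∀ s ∈ n.primeFactors.powerset,
      Ω (∏ p ∈ s, p) = #s ∧ μ (∏ p ∈ s, p) = (-1) ^ #s := by
    intro s hs
    have hsub := mem_powerset.mp hs
    have hsq : Squarefree (∏ p ∈ s, p) := hn.squarefree_of_dvd <|
      (prod_dvd_prod_of_subset _ _ _ hsub).trans (Nat.prod_primeFactors_of_squarefree hn).dvd
    have hΩ : Ω (∏ p ∈ s, p) = #s := by
      rw [← (cardDistinctFactors_eq_cardFactors_iff_squarefree hsq.ne_zero).mpr hsq,
        cardDistinctFactors_eq_card_primeFactors,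
        Nat.primeFactors_prod fun p hp => Nat.prime_of_mem_primeFactors (hsub hp)]
    exact ⟨hΩ, by rw [moebius_apply_of_squarefree hsq, hΩ]⟩
  rw [sum_filter, Nat.sum_divisors_eq_sum_powerset_primeFactors hn,
    sum_congr rfl fun s hs => by rw [(hprod s hs).1, (hprod s hs).2], ← sum_filter,
    ← sum_fiberwise_of_maps_to (g := card) (t := range (K + 1))
      (fun s hs => mem_range_succ_iff.mpr (mem_filter.mp hs).2),
    cardDistinctFactors_eq_card_primeFactors]
  refine sum_congr rfl fun j hj => ?_
  rw [filter_filter, sum_congr rfl fun s hs => by rw [(mem_filter.mp hs).2.2]]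
  have hfib :
      {s ∈ n.primeFactors.powerset | #s ≤ K ∧ #s = j} = powersetCard j n.primeFactors := by
    rw [powersetCard_eq_filter]
    ext s
    simp only [mem_filter]
    grind
  rw [hfib, sum_const, card_powersetCard, nsmul_eq_mul, mul_comm]

theorem Smu_eq_of_cardFactors_eq {n K : ℕ} (hsq : Squarefree n) (hΩ : Ω n = 2 * K + 1)
    (hsmall : ∀ d, d ∣ n → Ω d ≤ K → d ^ 2 < n) : Smu n = (-1) ^ K * (2 * K).choose K := by
  have hn : n ≠ 1 := by rintro rfl; simp at hΩ
  have hcut : ∀ d ∈ n.divisors, d ^ 2 < n ↔ Ω d ≤ K := by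
    intro d hd
    have hdvd := Nat.dvd_of_mem_divisors hd
    have hmul : d * (n / d) = n := Nat.mul_div_cancel' hdvd
    refine ⟨fun hd_lt => ?_, hsmall d hdvd⟩
    by_contra hK
    have hsum : Ω d + Ω (n / d) = 2 * K + 1 := by
      rw [← cardFactors_mul (ne_zero_of_dvd_ne_zero hsq.ne_zero hdvd)
        (ne_zero_of_dvd_ne_zero hsq.ne_zero (Nat.div_dvd_of_dvd hdvd)), hmul, hΩ]
    exact (sq_lt_iff_not_sq_lt_of_mul_eq hsq hn hmul).mp hd_lt
      (hsmall _ (Nat.div_dvd_of_dvd hdvd) (by omega))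
  rw [Smu, filter_congr hcut, sum_divisors_moebius_of_cardFactors_le hsq,
    (cardDistinctFactors_eq_cardFactors_iff_squarefree hsq.ne_zero).mpr hsq, hΩ,
    Int.alternating_sum_range_choose_eq_choose]

theorem Nat.minFac_pow_cardFactors_le {m n : ℕ} (hn : n ≠ 0) (hm : m ∣ n) :
    n.minFac ^ Ω m ≤ m := by
  conv_rhs => rw [← Nat.prod_primeFactorsList (ne_zero_of_dvd_ne_zero hn hm)]
  exact List.pow_card_le_prod _ _ fun p hp => Nat.minFac_le_of_dvd
    (Nat.prime_of_mem_primeFactorsList hp).two_le ((Nat.dvd_of_mem_primeFactorsList hp).trans hm)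

theorem Smu_eq_of_lt_minFac_pow {n K : ℕ} (hsq : Squarefree n) (hΩ : Ω n = 2 * K + 1)
    (hq : n < n.minFac ^ (2 * K + 2)) : Smu n = (-1) ^ K * (2 * K).choose K := by
  refine Smu_eq_of_cardFactors_eq hsq hΩ fun d hd hK => ?_
  obtain ⟨e, rfl⟩ := hd
  have hd0 : d ≠ 0 := left_ne_zero_of_mul hsq.ne_zero
  have he0 : e ≠ 0 := right_ne_zero_of_mul hsq.ne_zero
  have he : (d * e).minFac ^ (K + 1) ≤ e :=
    (Nat.pow_le_pow_right (Nat.minFac_pos _) (by rw [cardFactors_mul hd0 he0] at hΩ; omega)).trans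
      (Nat.minFac_pow_cardFactors_le hsq.ne_zero (dvd_mul_left e d))
  set q := (d * e).minFac
  have : d ^ 2 * q ^ (2 * K + 2) < d * e * q ^ (2 * K + 2) := by
    calc d ^ 2 * q ^ (2 * K + 2) = (d * q ^ (K + 1)) ^ 2 := by ring
      _ ≤ (d * e) ^ 2 := by gcongr
      _ = d * e * (d * e) := sq _
      _ < d * e * q ^ (2 * K + 2) := by gcongr
  exact Nat.lt_of_mul_lt_mul_right this

theorem Smu_eq_neg_two {n : ℕ} (hsq : Squarefree n) (hΩ : Ω n = 3)
    (hp : ∀ p, p.Prime → p ∣ n → p ^ 2 < n) : Smu n = -2 := by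
  have hn : 1 < n := by
    have h1 : n ≠ 1 := by rintro rfl; simp at hΩ
    have := hsq.ne_zero
    omega
  refine Smu_eq_of_cardFactors_eq (K := 1) hsq hΩ fun d hd hK => ?_
  rcases Nat.le_one_iff_eq_zero_or_eq_one.mp hK with h0 | h1
  · rcases cardFactors_eq_zero_iff_eq_zero_or_one.mp h0 with rfl | rfl
    · exact absurd (Nat.eq_zero_of_zero_dvd hd) hsq.ne_zero
    · simpa using hn
  · exact hp d (cardFactors_eq_one_iff_prime.mp h1) hd

end

theorem moebius_sum_below_sqrt_general (n : ℕ) (hsq : Squarefree n) :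
    (ArithmeticFunction.moebius n = 1 → Smu n = 0) ∧
    (n.Prime → Smu n = 1) ∧
    ((∃ p : ℕ, p.Prime ∧ p ∣ n ∧ n < p ^ 2 ∧ p < n) → Smu n = 0) ∧
    (∀ p1 p2 p3 : ℕ, p1.Prime → p2.Prime → p3.Prime →
      p3 < p2 → p2 < p1 → n = p1 * p2 * p3 → p1 ^ 2 < n → Smu n = -2) ∧
    (ArithmeticFunction.cardFactors n = 7 → n < n.minFac ^ 8 → Smu n = -20) := by
  refine ⟨Smu_eq_zero_of_moebius_eq_one, fun hp => ?_,
    fun ⟨p, hp, hpn, hn, hpn'⟩ => Smu_eq_zero_of_prime_dvd hp hpn hn hpn',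
    fun p1 p2 p3 hp1 hp2 hp3 h32 h21 hn hlt => ?_,
    fun hΩ hq => by simpa [Nat.choose] using Smu_eq_of_lt_minFac_pow (K := 3) hsq hΩ hq⟩
  · have hq : n < n.minFac ^ 2 := by rw [hp.minFac_eq]; nlinarith [hp.two_le]
    simpa using
      Smu_eq_of_lt_minFac_pow (K := 0) hsq (ArithmeticFunction.cardFactors_apply_prime hp) hq
  · subst hn
    have hΩ : ArithmeticFunction.cardFactors (p1 * p2 * p3) = 3 := by
      simp [ArithmeticFunction.cardFactors_mul, hp1, hp2, hp3, hp1.ne_zero, hp2.ne_zero,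
        hp3.ne_zero]
    refine Smu_eq_neg_two hsq hΩ fun q hq hqn => lt_of_le_of_lt ?_ hlt
    have hq_le : q ≤ p1 := by
      rcases hq.dvd_mul.mp hqn with h12 | h3
      · rcases hq.dvd_mul.mp h12 with h1 | h2
        · exact ((Nat.prime_dvd_prime_iff_eq hq hp1).mp h1).le
        · exact ((Nat.prime_dvd_prime_iff_eq hq hp2).mp h2).le.trans h21.le
      · exact ((Nat.prime_dvd_prime_iff_eq hq hp3).mp h3).le.trans (h32.trans h21).le
    exact Nat.pow_le_pow_left hq_le 2

theorem moebius_sum_below_sqrt (n : ℕ) (hn : 0 < n) (hsq : Squarefree n) :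
    (ArithmeticFunction.moebius n = 1 → Smu n = 0) ∧
    (n.Prime → Smu n = 1) ∧
    ((∃ p : ℕ, p.Prime ∧ p ∣ n ∧ n < p ^ 2 ∧ p < n) → Smu n = 0) ∧
    (∀ p1 p2 p3 : ℕ, p1.Prime → p2.Prime → p3.Prime →
      p3 < p2 → p2 < p1 → n = p1 * p2 * p3 → p1 ^ 2 < n → Smu n = -2) ∧
    (ArithmeticFunction.cardFactors n = 7 → n < n.minFac ^ 8 → Smu n = -20) :=
  moebius_sum_below_sqrt_general n hsq
end

section
/- Let n be a squarefree positive integer and set T(n) := 2·#{d : d | n, d squarefree, Ω(d) = 3, n < d² and d² < n·P⁻(d)}. Then: (i) if n = p1·p2·p3·p4 with primes p4 < p3 < p2 < p1 satisfying p1 < p2·p3·p4 and p2·p3 < p1, then T(n) = 2; (ii) if Ω(n) ≤ 3 then T(n) = 0; (iii) if n = p1·p2·p3·p4 with primes p4 < p3 < p2 < p1 satisfying p1 > p2·p3·p4 or p2·p3 > p1, then T(n) = 0; (iv) if Ω(n) = 6 then T(n) ≤ 20; (v) if Ω(n) = 7 and P⁻(n)^8 > n, then T(n) = 0. -/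
/-!
For a divisor `d` of `n` put `c = n / d`. The two inequalities on `d` read `c < d` and
`d / P⁻(d) < c`; as `d` is not prime, each prime factor of `d` is at most `d / P⁻(d)`, hence
smaller than `c`. So `c > 1` and `Ω(n) = Ω(c) + 3 ≥ 4`, which is (ii). If `Ω(n) = 4`, then `c` is
a prime exceeding every prime factor of `d`, so `c = p₁`, `d = p₂p₃p₄`, and the inequalities
become those of (i). If `Ω(n) = 7`, then `c ≥ P⁻(n)⁴`, against `c² < cd = n < P⁻(n)⁸`. If
`Ω(n) = 6`, then `d ↦ n / d` sends the special divisors injectively to non-special squarefree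
divisors with three prime factors, of which there are at most `C(6, 3) = 20`.
-/

open scoped Classical

/-- `Tcount n = 2 · #{d ∣ n : d squarefree, Ω(d) = 3, √n < d < √(n·P⁻(d))}`, where the
condition `√n < d < √(n·P⁻(d))` is rendered as `n < d²` and `d² < n·P⁻(d)`. -/
noncomputable def Tcount (n : ℕ) : ℤ :=
  2 * ((n.divisors.filter (fun d => Squarefree d ∧
    ArithmeticFunction.cardFactors d = 3 ∧ n < d ^ 2 ∧ d ^ 2 < n * d.minFac)).card : ℤ)

open ArithmeticFunction Finset
open scoped ArithmeticFunction.Omega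

lemma Nat.le_div_minFac_of_prime_dvd {d p : ℕ} (hd0 : d ≠ 0) (hd : ¬d.Prime) (hp : p.Prime)
    (hpd : p ∣ d) : p ≤ d / d.minFac := by
  by_cases hpm : p = d.minFac
  · exact hpm ▸ Nat.minFac_le_div (Nat.pos_of_ne_zero hd0) hd
  · have hd1 : d ≠ 1 := fun h => hp.one_lt.ne' (Nat.dvd_one.mp (h ▸ hpd))
    have hdiv : p ∣ d / d.minFac := by
      rw [← Nat.mul_div_cancel' d.minFac_dvd, hp.dvd_mul] at hpd
      exact hpd.resolve_left fun h =>
        hpm ((Nat.prime_dvd_prime_iff_eq hp (Nat.minFac_prime hd1)).mp h)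
    exact Nat.le_of_dvd (Nat.div_pos (Nat.minFac_le (Nat.pos_of_ne_zero hd0)) d.minFac_pos) hdiv

lemma Nat.minFac_pow_cardFactors_le_of_dvd {m n : ℕ} (hn : n ≠ 0) (hmn : m ∣ n) :
    n.minFac ^ Ω m ≤ m := by
  have hm : m ≠ 0 := ne_zero_of_dvd_ne_zero hn hmn
  calc n.minFac ^ Ω m = n.minFac ^ m.primeFactorsList.length := by rw [cardFactors_apply]
    _ ≤ m.primeFactorsList.prod := List.pow_card_le_prod _ _ fun p hp =>
        Nat.minFac_le_of_dvd (Nat.prime_of_mem_primeFactorsList hp).two_le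
          ((Nat.dvd_of_mem_primeFactorsList hp).trans hmn)
    _ = m := Nat.prod_primeFactorsList hm

lemma Nat.card_primeFactors_of_squarefree {d : ℕ} (hd : Squarefree d) : #d.primeFactors = Ω d :=
  List.toFinset_card_of_nodup ((Nat.squarefree_iff_nodup_primeFactorsList hd.ne_zero).mp hd)

lemma card_filter_squarefree_cardFactors_le (n k : ℕ) :
    #{d ∈ n.divisors | Squarefree d ∧ Ω d = k} ≤ (Ω n).choose k :=
  calc #{d ∈ n.divisors | Squarefree d ∧ Ω d = k}
      ≤ #(n.primeFactors.powersetCard k) := by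
        refine card_le_card_of_injOn Nat.primeFactors (fun d hd => ?_) fun d hd e he hde => ?_
        · rw [mem_coe, mem_filter, Nat.mem_divisors] at hd
          rw [mem_coe, mem_powersetCard, Nat.card_primeFactors_of_squarefree hd.2.1]
          exact ⟨Nat.primeFactors_mono hd.1.1 hd.1.2, hd.2.2⟩
        · rw [mem_coe, mem_filter] at hd he
          rw [← Nat.prod_primeFactors_of_squarefree hd.2.1,
            ← Nat.prod_primeFactors_of_squarefree he.2.1, hde]
    _ = (#n.primeFactors).choose k := card_powersetCard _ _
    _ ≤ (Ω n).choose k := Nat.choose_le_choose _ (List.toFinset_card_le _)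

def specialDivisors (n : ℕ) : Finset ℕ :=
  n.divisors.filter fun d => Squarefree d ∧ Ω d = 3 ∧ n < d ^ 2 ∧ d ^ 2 < n * d.minFac

lemma Tcount_eq_two_mul_card (n : ℕ) : Tcount n = 2 * #(specialDivisors n) := rfl

lemma mem_specialDivisors {n d : ℕ} : d ∈ specialDivisors n ↔
    d ∣ n ∧ n ≠ 0 ∧ Squarefree d ∧ Ω d = 3 ∧ n / d < d ∧ d / d.minFac < n / d := by
  rw [specialDivisors, mem_filter, Nat.mem_divisors, and_assoc]
  refine and_congr_right fun ⟨c, hc⟩ => and_congr_right fun hn => and_congr_right fun _ =>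
    and_congr_right fun _ => ?_
  have hd : 0 < d := Nat.pos_of_ne_zero (left_ne_zero_of_mul (hc ▸ hn))
  subst hc
  rw [Nat.mul_div_cancel_left c hd, Nat.div_lt_iff_lt_mul d.minFac_pos, sq, mul_assoc,
    Nat.mul_lt_mul_left hd, Nat.mul_lt_mul_left hd]

namespace specialDivisors

variable {n d : ℕ}

lemma div_mul_cancel (hd : d ∈ specialDivisors n) : n / d * d = n :=
  Nat.div_mul_cancel (mem_specialDivisors.mp hd).1

lemma div_lt (hd : d ∈ specialDivisors n) : n / d < d :=
  (mem_specialDivisors.mp hd).2.2.2.2.1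

lemma prime_lt_div (hd : d ∈ specialDivisors n) {p : ℕ} (hp : p.Prime) (hpd : p ∣ d) :
    p < n / d := by
  obtain ⟨-, -, hsq, hΩ, -, hlt⟩ := mem_specialDivisors.mp hd
  have hnp : ¬d.Prime := fun h => by simp [cardFactors_apply_prime h] at hΩ
  exact (Nat.le_div_minFac_of_prime_dvd hsq.ne_zero hnp hp hpd).trans_lt hlt

lemma one_lt_div (hd : d ∈ specialDivisors n) : 1 < n / d := by
  have hd1 : d ≠ 1 := by rintro rfl; simp [mem_specialDivisors] at hd
  have hp := Nat.minFac_prime hd1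
  exact hp.one_lt.trans (prime_lt_div hd hp d.minFac_dvd)

lemma le_div_of_prime_dvd (hd : d ∈ specialDivisors n) {p : ℕ} (hp : p.Prime) (hpn : p ∣ n) :
    p ≤ n / d := by
  rw [← div_mul_cancel hd, hp.dvd_mul] at hpn
  rcases hpn with hpc | hpd
  · exact Nat.le_of_dvd (Nat.zero_lt_of_lt (one_lt_div hd)) hpc
  · exact (prime_lt_div hd hp hpd).le

lemma cardFactors_div_add (hd : d ∈ specialDivisors n) : Ω (n / d) + 3 = Ω n := by
  obtain ⟨-, -, hsq, hΩ, -⟩ := mem_specialDivisors.mp hd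
  rw [← hΩ, ← cardFactors_mul (Nat.ne_zero_of_lt (one_lt_div hd)) hsq.ne_zero, div_mul_cancel hd]

lemma sq_div_lt (hd : d ∈ specialDivisors n) : (n / d) ^ 2 < n := by
  calc (n / d) ^ 2 = n / d * (n / d) := sq _
    _ < n / d * d := Nat.mul_lt_mul_of_pos_left (div_lt hd)
        (Nat.zero_lt_of_lt (one_lt_div hd))
    _ = n := div_mul_cancel hd

lemma div_notMem (hd : d ∈ specialDivisors n) : n / d ∉ specialDivisors n := by
  obtain ⟨hdvd, hn, -⟩ := mem_specialDivisors.mp hd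
  rw [mem_specialDivisors, Nat.div_div_self hdvd hn]
  exact fun h => (div_lt hd).not_gt h.2.2.2.2.1

end specialDivisors

lemma specialDivisors_eq_empty_of_cardFactors_le {n : ℕ} (h : Ω n ≤ 3) : specialDivisors n = ∅ :=
  eq_empty_of_forall_notMem fun _ hd => by
    have := cardFactors_pos_iff_one_lt.mpr (specialDivisors.one_lt_div hd)
    have := specialDivisors.cardFactors_div_add hd
    omega

lemma specialDivisors_eq_empty_of_lt_minFac_pow {n : ℕ} (hΩ : Ω n = 7) (h : n < n.minFac ^ 8) :
    specialDivisors n = ∅ :=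
  eq_empty_of_forall_notMem fun d hd => by
    obtain ⟨hdvd, hn, -⟩ := mem_specialDivisors.mp hd
    have hΩd : Ω (n / d) = 4 := by have := specialDivisors.cardFactors_div_add hd; omega
    have hle := Nat.minFac_pow_cardFactors_le_of_dvd hn (Nat.div_dvd_of_dvd hdvd)
    rw [hΩd] at hle
    refine lt_irrefl n ?_
    calc n < n.minFac ^ 8 := h
      _ = (n.minFac ^ 4) ^ 2 := by ring
      _ ≤ (n / d) ^ 2 := Nat.pow_le_pow_left hle 2
      _ < n := specialDivisors.sq_div_lt hd


lemma card_specialDivisors_le_of_cardFactors_eq_six {n : ℕ} (hsq : Squarefree n)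
    (hΩ : Ω n = 6) : #(specialDivisors n) ≤ 10 := by
  set S := specialDivisors n
  set T := {d ∈ n.divisors | Squarefree d ∧ Ω d = 3}
  have hST : S ⊆ T := fun d hd => by
    obtain ⟨hdvd, hn, hsqd, hΩd, -⟩ := mem_specialDivisors.mp hd
    exact mem_filter.mpr ⟨Nat.mem_divisors.mpr ⟨hdvd, hn⟩, hsqd, hΩd⟩
  have hImT : S.image (n / ·) ⊆ T := by
    simp only [subset_iff, mem_image, forall_exists_index, and_imp, forall_apply_eq_imp_iff₂]
    intro d hd
    obtain ⟨hdvd, hn, -⟩ := mem_specialDivisors.mp hd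
    have := specialDivisors.cardFactors_div_add hd
    exact mem_filter.mpr ⟨Nat.mem_divisors.mpr ⟨Nat.div_dvd_of_dvd hdvd, hn⟩,
      hsq.squarefree_of_dvd (Nat.div_dvd_of_dvd hdvd), by omega⟩
  have hdisj : Disjoint S (S.image (n / ·)) := by
    simp only [disjoint_right, mem_image, forall_exists_index, and_imp, forall_apply_eq_imp_iff₂]
    exact fun d hd => specialDivisors.div_notMem hd
  have hinj : #(S.image (n / ·)) = #S := card_image_of_injOn fun d hd e he hde => by
    obtain ⟨hdvd, hn, -⟩ := mem_specialDivisors.mp hd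
    rw [← Nat.div_div_self hdvd hn, ← Nat.div_div_self (mem_specialDivisors.mp he).1 hn]
    exact congrArg (n / ·) hde
  have hT : #T ≤ 20 := by
    have := card_filter_squarefree_cardFactors_le n 3
    rwa [hΩ] at this
  have := card_le_card (union_subset hST hImT)
  rw [card_union_of_disjoint hdisj, hinj] at this
  omega

lemma Nat.minFac_prime_mul_prime_mul_prime {q₁ q₂ q₃ : ℕ} (hq₁ : q₁.Prime) (hq₂ : q₂.Prime)
    (hq₃ : q₃.Prime) (h₃₂ : q₃ < q₂) (h₂₁ : q₂ < q₁) : (q₁ * q₂ * q₃).minFac = q₃ := by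
  refine le_antisymm (Nat.minFac_le_of_dvd hq₃.two_le (dvd_mul_left q₃ (q₁ * q₂))) ?_
  refine (Nat.le_minFac.mpr fun p hp hpd => ?_).resolve_left (by simp [mul_eq_one, hq₃.ne_one])
  rw [hp.dvd_mul, hp.dvd_mul, Nat.prime_dvd_prime_iff_eq hp hq₁, Nat.prime_dvd_prime_iff_eq hp hq₂,
    Nat.prime_dvd_prime_iff_eq hp hq₃] at hpd
  omega

lemma prime_mul_prime_mul_prime_mem_specialDivisors_iff {c q₁ q₂ q₃ : ℕ} (hc : c ≠ 0)
    (hq₁ : q₁.Prime) (hq₂ : q₂.Prime) (hq₃ : q₃.Prime) (h₃₂ : q₃ < q₂) (h₂₁ : q₂ < q₁) :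
    q₁ * q₂ * q₃ ∈ specialDivisors (c * (q₁ * q₂ * q₃)) ↔ c < q₁ * q₂ * q₃ ∧ q₁ * q₂ < c := by
  have hsq : Squarefree (q₁ * q₂ * q₃) := by
    simp only [Nat.squarefree_mul_iff, Nat.coprime_mul_iff_left, Nat.coprime_primes hq₁ hq₂,
      Nat.coprime_primes hq₁ hq₃, Nat.coprime_primes hq₂ hq₃, hq₁.squarefree, hq₂.squarefree,
      hq₃.squarefree, and_true]
    omega
  have hΩ : Ω (q₁ * q₂ * q₃) = 3 := by
    rw [cardFactors_mul (by positivity [hq₁.pos, hq₂.pos]) hq₃.ne_zero,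
      cardFactors_mul hq₁.ne_zero hq₂.ne_zero, cardFactors_apply_prime hq₁,
      cardFactors_apply_prime hq₂, cardFactors_apply_prime hq₃]
  rw [mem_specialDivisors, Nat.mul_div_cancel _ (Nat.pos_of_ne_zero hsq.ne_zero),
    Nat.minFac_prime_mul_prime_mul_prime hq₁ hq₂ hq₃ h₃₂ h₂₁, Nat.mul_div_cancel _ hq₃.pos]
  simp [hsq, hΩ, hc, hsq.ne_zero]

lemma specialDivisors_mul_four_primes {p₁ p₂ p₃ p₄ : ℕ} (hp₁ : p₁.Prime) (hp₂ : p₂.Prime)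
    (hp₃ : p₃.Prime) (hp₄ : p₄.Prime) (h₄₃ : p₄ < p₃) (h₃₂ : p₃ < p₂) (h₂₁ : p₂ < p₁) :
    specialDivisors (p₁ * p₂ * p₃ * p₄) =
      if p₁ < p₂ * p₃ * p₄ ∧ p₂ * p₃ < p₁ then {p₂ * p₃ * p₄} else ∅ := by
  have hΩ : Ω (p₁ * p₂ * p₃ * p₄) = 4 := by
    simp [cardFactors_mul, hp₁.ne_zero, hp₂.ne_zero, hp₃.ne_zero, hp₄.ne_zero,
      cardFactors_apply_prime, hp₁, hp₂, hp₃, hp₄]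
  have hp₁_max : ∀ q, q.Prime → q ∣ p₁ * p₂ * p₃ * p₄ → q ≤ p₁ := fun q hq hqn => by
    rw [hq.dvd_mul, hq.dvd_mul, hq.dvd_mul, Nat.prime_dvd_prime_iff_eq hq hp₁,
      Nat.prime_dvd_prime_iff_eq hq hp₂, Nat.prime_dvd_prime_iff_eq hq hp₃,
      Nat.prime_dvd_prime_iff_eq hq hp₄] at hqn
    omega
  have hn : p₁ * p₂ * p₃ * p₄ = p₁ * (p₂ * p₃ * p₄) := by ring
  have hmem := prime_mul_prime_mul_prime_mem_specialDivisors_iff hp₁.ne_zero hp₂ hp₃ hp₄ h₄₃ h₃₂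
  generalize p₁ * p₂ * p₃ * p₄ = n at hΩ hp₁_max hn ⊢
  rw [← hn] at hmem
  have hsub : specialDivisors n ⊆ {p₂ * p₃ * p₄} := fun d hd => by
    obtain ⟨hdvd, hn0, -⟩ := mem_specialDivisors.mp hd
    have hc : (n / d).Prime := by
      rw [← cardFactors_eq_one_iff_prime]
      have := specialDivisors.cardFactors_div_add hd
      omega
    have hc_eq : n / d = p₁ := le_antisymm (hp₁_max _ hc (Nat.div_dvd_of_dvd hdvd))
      (specialDivisors.le_div_of_prime_dvd hd hp₁ (hn ▸ dvd_mul_right _ _))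
    rw [mem_singleton, ← Nat.div_div_self hdvd hn0, hc_eq, hn, Nat.mul_div_cancel_left _ hp₁.pos]
  split_ifs with h
  · exact eq_singleton_iff_unique_mem.mpr ⟨hmem.mpr h, fun d hd => mem_singleton.mp (hsub hd)⟩
  · exact (subset_singleton_iff.mp hsub).resolve_right
      fun he => h (hmem.mp (he ▸ mem_singleton_self _))

theorem count_special_divisors_general (n : ℕ) (hsq : Squarefree n) :
    (∀ p1 p2 p3 p4 : ℕ, p1.Prime → p2.Prime → p3.Prime → p4.Prime →
      p4 < p3 → p3 < p2 → p2 < p1 → n = p1 * p2 * p3 * p4 →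
      p1 < p2 * p3 * p4 → p2 * p3 < p1 → Tcount n = 2) ∧
    (ArithmeticFunction.cardFactors n ≤ 3 → Tcount n = 0) ∧
    (∀ p1 p2 p3 p4 : ℕ, p1.Prime → p2.Prime → p3.Prime → p4.Prime →
      p4 < p3 → p3 < p2 → p2 < p1 → n = p1 * p2 * p3 * p4 →
      (p2 * p3 * p4 < p1 ∨ p1 < p2 * p3) → Tcount n = 0) ∧
    (ArithmeticFunction.cardFactors n = 6 → Tcount n ≤ 20) ∧
    (ArithmeticFunction.cardFactors n = 7 → n < n.minFac ^ 8 → Tcount n = 0) := by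
  simp only [Tcount_eq_two_mul_card]
  refine ⟨fun p1 p2 p3 p4 hp1 hp2 hp3 hp4 h43 h32 h21 hn hlt₁ hlt₂ => ?_, fun hΩ => ?_,
    fun p1 p2 p3 p4 hp1 hp2 hp3 hp4 h43 h32 h21 hn hout => ?_, fun hΩ => ?_, fun hΩ hlt => ?_⟩
  · rw [hn, specialDivisors_mul_four_primes hp1 hp2 hp3 hp4 h43 h32 h21,
      if_pos ⟨hlt₁, hlt₂⟩, card_singleton]
    rfl
  · rw [specialDivisors_eq_empty_of_cardFactors_le hΩ, card_empty]
    rfl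
  · rw [hn, specialDivisors_mul_four_primes hp1 hp2 hp3 hp4 h43 h32 h21, if_neg (by omega),
      card_empty]
    rfl
  · have := card_specialDivisors_le_of_cardFactors_eq_six hsq hΩ
    omega
  · rw [specialDivisors_eq_empty_of_lt_minFac_pow hΩ hlt, card_empty]
    rfl

theorem count_special_divisors (n : ℕ) (hn : 0 < n) (hsq : Squarefree n) :
    (∀ p1 p2 p3 p4 : ℕ, p1.Prime → p2.Prime → p3.Prime → p4.Prime →
      p4 < p3 → p3 < p2 → p2 < p1 → n = p1 * p2 * p3 * p4 →
      p1 < p2 * p3 * p4 → p2 * p3 < p1 → Tcount n = 2) ∧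
    (ArithmeticFunction.cardFactors n ≤ 3 → Tcount n = 0) ∧
    (∀ p1 p2 p3 p4 : ℕ, p1.Prime → p2.Prime → p3.Prime → p4.Prime →
      p4 < p3 → p3 < p2 → p2 < p1 → n = p1 * p2 * p3 * p4 →
      (p2 * p3 * p4 < p1 ∨ p1 < p2 * p3) → Tcount n = 0) ∧
    (ArithmeticFunction.cardFactors n = 6 → Tcount n ≤ 20) ∧
    (ArithmeticFunction.cardFactors n = 7 → n < n.minFac ^ 8 → Tcount n = 0) :=
  count_special_divisors_general n hsq
end
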